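/- Assume λ₂ = 0 and λ₁ > 0. Let u be an optimal control for the infinite-horizon problem P^∞_{λ₁,0} with initial data (s₀,i₀) ∈ B, i₀ > 0, and let T^u_{γ/β} < ∞ denote the (finite) time at which s^u reaches the level γ/β. Then for every T > T^u_{γ/β}, the restriction of u to [0,T] is optimal for the finite-horizon problem with target: it minimizes ∫₀^T λ₁·ū(t) dt among all controls ū : (0,T) → [0,u_max] whose trajectory satisfies i^ū(t) ≤ i_M on [0,T] and s^ū(T) < γ/β. -/

import Mathlib

/-!
Extend a feasible finite-horizon control `v` by zero after `T`. Since `s(T) < γ/β`, along the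
uncontrolled SIR flow after `T` both `s` and `i` decrease, so the extended trajectory never exceeds
`i_M` and is admissible for the infinite-horizon problem, at cost `∫₀ᵀ λ₁ v`. Optimality of `u`
then gives `∫₀ᵀ λ₁ u ≤ J^∞(u) ≤ ∫₀ᵀ λ₁ v`.

The uncontrolled flow is only locally Lipschitz, so it is obtained from Picard–Lindelöf for the
field clipped to a box; the clipping is inactive because the flow stays in the box, which needs
`s(T), i(T) ≥ 0`. That positivity follows from a Grönwall argument on the integral equations.
-/

open MeasureTheory Filter Set intervalIntegral
open scoped ENNReal

noncomputable section

/-- A control: a measurable (essentially bounded) function with values in `[0, umax]`. -/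
def IsControl (umax : ℝ) (u : ℝ → ℝ) : Prop :=
  Measurable u ∧ ∀ t : ℝ, u t ∈ Set.Icc (0 : ℝ) umax

/-- Solution of the controlled SIR system on `[0,∞)`, in integral (i.e. locally absolutely
continuous) form: `s' = -(β-u)·s·i`, `i' = (β-u)·s·i - γ·i` a.e., `s 0 = s₀`, `i 0 = i₀`. -/
def SIRSol (β γ : ℝ) (u s i : ℝ → ℝ) (s₀ i₀ : ℝ) : Prop :=
  Continuous s ∧ Continuous i ∧
  (∀ t : ℝ, 0 ≤ t → s t = s₀ + ∫ τ in (0:ℝ)..t, -((β - u τ) * s τ * i τ)) ∧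
  (∀ t : ℝ, 0 ≤ t → i t = i₀ + ∫ τ in (0:ℝ)..t, ((β - u τ) * s τ * i τ - γ * i τ))

/-- Solution of the controlled SIR system on `[0,T]`, in integral form. -/
def SIRSolOn (β γ T : ℝ) (u s i : ℝ → ℝ) (s₀ i₀ : ℝ) : Prop :=
  ContinuousOn s (Set.Icc 0 T) ∧ ContinuousOn i (Set.Icc 0 T) ∧
  (∀ t ∈ Set.Icc (0:ℝ) T, s t = s₀ + ∫ τ in (0:ℝ)..t, -((β - u τ) * s τ * i τ)) ∧
  (∀ t ∈ Set.Icc (0:ℝ) T, i t = i₀ + ∫ τ in (0:ℝ)..t, ((β - u τ) * s τ * i τ - γ * i τ))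

/-- The triangle `T = {(s,i) ∈ (0,1]² : s + i ≤ 1}`. -/
def Triangle : Set (ℝ × ℝ) :=
  {p | 0 < p.1 ∧ p.1 ≤ 1 ∧ 0 < p.2 ∧ p.2 ≤ 1 ∧ p.1 + p.2 ≤ 1}

/-- The curve `Φ_max`. -/
def PhiMax (β γ umax iM : ℝ) (x : ℝ) : ℝ :=
  if x < γ / (β - umax) then iM
  else γ / (β - umax) + iM - x + (γ / (β - umax)) * (Real.log x - Real.log (γ / (β - umax)))

/-- The curve `Φ₀`. -/
def Phi0 (β γ iM : ℝ) (x : ℝ) : ℝ :=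
  if x < γ / β then iM
  else γ / β + iM - x + (γ / β) * (Real.log x - Real.log (γ / β))

/-- The ICU (state) constraint `i(t) ≤ i_M` for all `t ≥ 0`. -/
def Admissible (iM : ℝ) (i : ℝ → ℝ) : Prop := ∀ t : ℝ, 0 ≤ t → i t ≤ iM

/-- Infinite-horizon cost `J^∞(u) = ∫₀^∞ (λ₁ u + λ₂ i) dt`, with values in `[0,∞]`. -/
def Cost (l1 l2 : ℝ) (u i : ℝ → ℝ) : ℝ≥0∞ :=
  ∫⁻ t in Set.Ioi (0:ℝ), ENNReal.ofReal (l1 * u t + l2 * i t)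

/-- Finite-horizon cost `J^T(u) = ∫₀^T (λ₁ u + λ₂ i) dt`. -/
def CostT (l1 l2 T : ℝ) (u i : ℝ → ℝ) : ℝ≥0∞ :=
  ∫⁻ t in Set.Ioc (0:ℝ) T, ENNReal.ofReal (l1 * u t + l2 * i t)

/-- The safe (no-effort) zone `A`. -/
def SafeZone (β γ iM : ℝ) : Set (ℝ × ℝ) :=
  {p | p ∈ Triangle ∧ ∃ s i : ℝ → ℝ,
    SIRSol β γ (fun _ => 0) s i p.1 p.2 ∧ Admissible iM i}

/-- The viable (feasible) set `B`. -/
def ViableSet (β γ umax iM : ℝ) : Set (ℝ × ℝ) :=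
  {p | p ∈ Triangle ∧ ∃ u s i : ℝ → ℝ, IsControl umax u ∧
    SIRSol β γ u s i p.1 p.2 ∧ Admissible iM i}

/-- Weak* convergence in `L^∞(0,∞)`: testing against every `L¹` function. -/
def WeakStarLim (un : ℕ → ℝ → ℝ) (u : ℝ → ℝ) : Prop :=
  ∀ g : ℝ → ℝ, MeasureTheory.IntegrableOn g (Set.Ioi 0) →
    Filter.Tendsto (fun n => ∫ t in Set.Ioi (0:ℝ), un n t * g t) Filter.atTop
      (nhds (∫ t in Set.Ioi (0:ℝ), u t * g t))

open scoped NNReal Topology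

lemma eq_zero_of_abs_le_mul_integral_right {x : ℝ → ℝ} {a b K : ℝ} (hx : Continuous x)
    (h : ∀ t ∈ Icc a b, |x t| ≤ K * ∫ τ in t..b, |x τ|) : ∀ t ∈ Icc a b, x t = 0 := by
  -- Grönwall for `t ↦ ∫_{a+b-t}^b |x|` runs the inequality forward in time.
  have hF' : ∀ t, HasDerivAt (fun t => ∫ τ in (a + b - t)..b, |x τ|) |x (a + b - t)| t := by
    intro t
    have hleft := intervalIntegral.integral_hasDerivAt_left
      (hx.abs.intervalIntegrable (a + b - t) b) (hx.abs.stronglyMeasurableAtFilter _ _)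
      hx.abs.continuousAt
    simpa using hleft.comp_const_sub (a + b) t
  have hF0 : ∀ t ∈ Icc a b, ∫ τ in (a + b - t)..b, |x τ| = 0 :=
    eq_zero_of_abs_deriv_le_mul_abs_self_of_eq_zero_right
      (HasDerivAt.continuousOn fun t _ => hF' t) (fun t _ => (hF' t).hasDerivWithinAt)
      (by simp) fun t ht => by
        rw [Real.norm_eq_abs, abs_abs, Real.norm_eq_abs, abs_of_nonneg
          (intervalIntegral.integral_nonneg (by linarith [ht.1]) fun _ _ => abs_nonneg _)]
        exact h _ ⟨by linarith [ht.2], by linarith [ht.1]⟩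
  intro t ht
  have hxt := h t ht
  have hzero := hF0 (a + b - t) ⟨by linarith [ht.2], by linarith [ht.1]⟩
  rw [sub_sub_cancel] at hzero
  simpa [hzero] using hxt

lemma pos_of_eq_add_integral_mul {x g : ℝ → ℝ} {a b K : ℝ} (hx : Continuous x)
    (hg : IntervalIntegrable g volume a b) (hgK : ∀ t ∈ Icc a b, |g t| ≤ K)
    (heq : ∀ t ∈ Icc a b, x t = x a + ∫ τ in a..t, g τ * x τ) (ha : 0 < x a) :
    ∀ t ∈ Icc a b, 0 < x t := by
  intro t₂ ht₂
  by_contra! hneg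
  obtain ⟨t₁, ht₁, hzero⟩ := intermediate_value_Icc' ht₂.1 hx.continuousOn ⟨hneg, ha.le⟩
  have hsub : Icc a t₁ ⊆ Icc a b := Icc_subset_Icc_right (ht₁.2.trans ht₂.2)
  have hgx : ∀ c ∈ Icc a b, IntervalIntegrable (fun τ => g τ * x τ) volume a c := fun c hc =>
    (hg.mul_continuousOn hx.continuousOn).mono_set
      (uIcc_subset_uIcc left_mem_uIcc (Icc_subset_uIcc hc))
  have hbound : ∀ t ∈ Icc a t₁, |x t| ≤ K * ∫ τ in t..t₁, |x τ| := by
    intro t ht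
    have hdiff : x t₁ - x t = ∫ τ in t..t₁, g τ * x τ := by
      rw [heq t₁ (hsub ⟨ht₁.1, le_rfl⟩), heq t (hsub ht), add_sub_add_left_eq_sub,
        intervalIntegral.integral_interval_sub_left (hgx t₁ (hsub ⟨ht₁.1, le_rfl⟩))
          (hgx t (hsub ht))]
    rw [hzero, zero_sub] at hdiff
    rw [← abs_neg, hdiff, ← intervalIntegral.integral_const_mul, ← Real.norm_eq_abs]
    refine intervalIntegral.norm_integral_le_of_norm_le ht.2 (ae_of_all _ fun τ hτ => ?_)
      ((hx.abs.intervalIntegrable (μ := volume) _ _).const_mul K)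
    rw [Real.norm_eq_abs, abs_mul]
    exact mul_le_mul_of_nonneg_right (hgK τ (hsub ⟨ht.1.trans hτ.1.le, hτ.2⟩)) (abs_nonneg _)
  exact ha.ne' (eq_zero_of_abs_le_mul_integral_right hx hbound a ⟨le_rfl, ht₁.1⟩)

lemma nonneg_of_hasDerivAt_nonneg_of_neg {f f' : ℝ → ℝ} {a : ℝ} (hf : Continuous f)
    (hderiv : ∀ t, a < t → HasDerivAt f (f' t) t) (hf' : ∀ t, a < t → f t < 0 → 0 ≤ f' t)
    (ha : 0 ≤ f a) : ∀ t, a ≤ t → 0 ≤ f t := by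
  intro t₂ ht₂
  by_contra! hneg
  obtain ⟨t₁, ⟨ht₁, hft₁⟩, hgreatest⟩ :=
    (isCompact_Icc.inter_right (isClosed_le continuous_const hf)).exists_isGreatest
      (⟨a, ⟨le_rfl, ht₂⟩, ha⟩ : (Icc a t₂ ∩ {t | 0 ≤ f t}).Nonempty)
  have hlt : ∀ t ∈ Ioc t₁ t₂, f t < 0 := fun t ht => by
    by_contra! h
    exact (hgreatest ⟨⟨ht₁.1.trans ht.1.le, ht.2⟩, h⟩).not_gt ht.1
  have hmono : MonotoneOn f (Icc t₁ t₂) := by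
    refine monotoneOn_of_hasDerivWithinAt_nonneg (convex_Icc _ _) hf.continuousOn
      (fun t ht => (hderiv t ?_).hasDerivWithinAt) (fun t ht => hf' t ?_ (hlt t ?_)) <;>
    rw [interior_Icc] at ht
    exacts [ht₁.1.trans_lt ht.1, ht₁.1.trans_lt ht.1, Ioo_subset_Ioc_self ht]
  exact hneg.not_ge (hft₁.trans (hmono ⟨le_rfl, ht₁.2⟩ ⟨ht₁.2, le_rfl⟩ ht₁.2))

lemma ContinuousOn.exists_continuous_eqOn_Icc {f : ℝ → ℝ} {a b : ℝ} (hab : a ≤ b)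
    (hf : ContinuousOn f (Icc a b)) : ∃ g : ℝ → ℝ, Continuous g ∧ EqOn g f (Icc a b) :=
  ⟨IccExtend hab ((Icc a b).domRestrict f),
    continuous_IccExtend_iff.2 (continuousOn_iff_continuous_domRestrict.1 hf),
    fun _ ht => IccExtend_of_mem hab _ ht⟩

lemma eq_add_integral_of_hasDerivAt_of_gt {x f : ℝ → ℝ} {T x₀ : ℝ} (hx : Continuous x)
    (hf : ∀ t, IntervalIntegrable f volume 0 t) (hxT : x T = x₀ + ∫ τ in 0..T, f τ)
    (hderiv : ∀ t, T < t → HasDerivAt x (f t) t) :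
    ∀ t, T ≤ t → x t = x₀ + ∫ τ in 0..t, f τ := by
  intro t ht
  have hTt : IntervalIntegrable f volume T t := (hf T).symm.trans (hf t)
  rw [← intervalIntegral.integral_add_adjacent_intervals (hf T) hTt,
    intervalIntegral.integral_eq_sub_of_hasDeriv_right_of_le ht hx.continuousOn
      (fun s hs => (hderiv s hs.1).hasDerivWithinAt) hTt]
  linarith

section GlobalExistence

variable {E : Type*} [NormedAddCommGroup E] [NormedSpace ℝ E] [CompleteSpace E]
  {f : E → E} {K : ℝ≥0} {C : ℝ}

lemma exists_forall_mem_Ioo_hasDerivAt_of_lipschitzWith (hf : LipschitzWith K f)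
    (hC : ∀ x, ‖f x‖ ≤ C) (t₀ : ℝ) (x₀ : E) {r : ℝ} (hr : 0 ≤ r) :
    ∃ α : ℝ → E, α t₀ = x₀ ∧ ∀ t ∈ Ioo (t₀ - r) (t₀ + r), HasDerivAt α (f (α t)) t := by
  have hpl : IsPicardLindelof (fun _ => f) (tmin := t₀ - r) (tmax := t₀ + r)
      ⟨t₀, by simp [hr]⟩ x₀ (C.toNNReal * r.toNNReal) 0 C.toNNReal K :=
    IsPicardLindelof.of_time_independent (fun x _ => (hC x).trans C.le_coe_toNNReal)
      hf.lipschitzOnWith (by simp [hr])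
  obtain ⟨α, hα₀, hα⟩ := hpl.exists_eq_forall_mem_Icc_hasDerivWithinAt₀
  exact ⟨α, hα₀, fun t ht => (hα t (Ioo_subset_Icc_self ht)).hasDerivAt (Icc_mem_nhds ht.1 ht.2)⟩

theorem exists_isIntegralCurve_of_lipschitzWith (hf : LipschitzWith K f) (hC : ∀ x, ‖f x‖ ≤ C)
    (t₀ : ℝ) (x₀ : E) : ∃ X : ℝ → E, X t₀ = x₀ ∧ IsIntegralCurve X (fun _ => f) := by
  set I : ℕ → Set ℝ := fun n => Ioo (t₀ - (n + 1)) (t₀ + (n + 1))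
  choose α hα₀ hα using fun n : ℕ =>
    exists_forall_mem_Ioo_hasDerivAt_of_lipschitzWith hf hC t₀ x₀ (r := n + 1) (by positivity)
  have hmono : Monotone I := fun n m hnm => by
    have : (n : ℝ) ≤ m := Nat.cast_le.2 hnm
    exact Ioo_subset_Ioo (by linarith) (by linarith)
  have hcons : ∀ n m, EqOn (α n) (α m) (I n ∩ I m) := by
    intro n m t ⟨htn, htm⟩
    obtain ⟨k, hkn, hkm, htk⟩ : ∃ k, I k ⊆ I n ∧ I k ⊆ I m ∧ t ∈ I k := by
      rcases le_total n m with h | h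
      · exact ⟨n, subset_rfl, hmono h, htn⟩
      · exact ⟨m, hmono h, subset_rfl, htm⟩
    refine ODE_solution_unique_of_mem_Ioo (v := fun _ => f) (s := fun _ => univ)
      (fun _ _ => hf.lipschitzOnWith) (t₀ := t₀) ⟨?_, ?_⟩
      (fun s hs => ⟨hα n s (hkn hs), trivial⟩) (fun s hs => ⟨hα m s (hkm hs), trivial⟩)
      (by rw [hα₀, hα₀]) htk <;> linarith [(k.cast_nonneg : (0 : ℝ) ≤ k)]
  set N : ℝ → ℕ := fun t => ⌈|t - t₀|⌉₊
  have hN : ∀ t, t ∈ I (N t) := fun t => by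
    have h := Nat.le_ceil |t - t₀|
    constructor <;> linarith [neg_abs_le (t - t₀), le_abs_self (t - t₀)]
  refine ⟨fun t => α (N t) t, by simp [N, hα₀], fun t => ?_⟩
  have hev : (fun s => α (N s) s) =ᶠ[𝓝 t] α (N t) :=
    Filter.eventually_of_mem (isOpen_Ioo.mem_nhds (hN t)) fun s hs =>
      hcons (N s) (N t) ⟨hN s, hs⟩
  exact (hα (N t) t (hN t)).congr_of_eventuallyEq hev

end GlobalExistence

def clip (c x : ℝ) : ℝ := max 0 (min x c)

lemma clip_nonneg (c x : ℝ) : 0 ≤ clip c x := le_max_left _ _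

lemma clip_le_of_le {c x d : ℝ} (hd : 0 ≤ d) (hx : x ≤ d) : clip c x ≤ d :=
  max_le hd ((min_le_left _ _).trans hx)

lemma clip_mem_Icc {c : ℝ} (hc : 0 ≤ c) (x : ℝ) : clip c x ∈ Icc 0 c :=
  ⟨clip_nonneg c x, max_le hc (min_le_right _ _)⟩

lemma clip_of_mem_Icc {c x : ℝ} (hx : x ∈ Icc 0 c) : clip c x = x := by
  rw [clip, min_eq_left hx.2, max_eq_right hx.1]

lemma clip_of_neg {c x : ℝ} (hx : x < 0) : clip c x = 0 :=
  max_eq_left ((min_le_left _ _).trans hx.le)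

lemma lipschitzWith_clip (c : ℝ) : LipschitzWith 1 (clip c) :=
  (LipschitzWith.id.min_const c).const_max 0

def sirField (β γ : ℝ) (p : ℝ × ℝ) : ℝ × ℝ := (-(β * p.1 * p.2), β * p.1 * p.2 - γ * p.2)

def clippedSirField (β γ c : ℝ) (p : ℝ × ℝ) : ℝ × ℝ := sirField β γ (clip c p.1, clip c p.2)

lemma exists_lipschitzWith_clippedSirField (β γ : ℝ) {c : ℝ} (hc : 0 ≤ c) :
    ∃ (K : ℝ≥0) (C : ℝ), LipschitzWith K (clippedSirField β γ c) ∧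
      ∀ p, ‖clippedSirField β γ c p‖ ≤ C := by
  set box : Set (ℝ × ℝ) := Icc 0 c ×ˢ Icc 0 c
  have hmaps : ∀ p : ℝ × ℝ, (clip c p.1, clip c p.2) ∈ box :=
    fun p => ⟨clip_mem_Icc hc p.1, clip_mem_Icc hc p.2⟩
  have hsmooth : ContDiff ℝ 1 (sirField β γ) := by unfold sirField; fun_prop
  obtain ⟨K, hK⟩ := hsmooth.contDiffOn.exists_lipschitzOnWith one_ne_zero
    ((convex_Icc 0 c).prod (convex_Icc 0 c)) (isCompact_Icc.prod isCompact_Icc)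
  obtain ⟨C, hC⟩ := (isCompact_Icc.prod isCompact_Icc).exists_bound_of_continuousOn
    hsmooth.continuous.continuousOn
  obtain ⟨L, hproj⟩ : ∃ L, LipschitzWith L fun p : ℝ × ℝ => (clip c p.1, clip c p.2) :=
    ⟨_, ((lipschitzWith_clip c).comp LipschitzWith.prod_fst).prodMk
      ((lipschitzWith_clip c).comp LipschitzWith.prod_snd)⟩
  refine ⟨K * L, C, ?_, fun p => hC _ (hmaps p)⟩
  rw [← lipschitzOnWith_univ]
  exact hK.comp hproj.lipschitzOnWith fun p _ => hmaps p

lemma IsIntegralCurve.mem_Icc_of_clippedSirField {β γ c s₁ i₁ T : ℝ} {X : ℝ → ℝ × ℝ}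
    (hX : IsIntegralCurve X (fun _ => clippedSirField β γ c)) (hX₀ : X T = (s₁, i₁))
    (hβ : 0 < β) (hs₁ : 0 ≤ s₁) (hs₁γ : s₁ < γ / β) (hi₁ : 0 ≤ i₁) :
    ∀ t, T ≤ t → (X t).1 ∈ Icc 0 s₁ ∧ (X t).2 ∈ Icc 0 i₁ := by
  set s : ℝ → ℝ := fun t => (X t).1
  set i : ℝ → ℝ := fun t => (X t).2
  have hs' : ∀ t, HasDerivAt s (-(β * clip c (s t) * clip c (i t))) t := fun t =>
    (hasFDerivAt_fst (p := X t)).comp_hasDerivAt t (hX t)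
  have hi' : ∀ t, HasDerivAt i (β * clip c (s t) * clip c (i t) - γ * clip c (i t)) t := fun t =>
    (hasFDerivAt_snd (p := X t)).comp_hasDerivAt t (hX t)
  have hsc : Continuous s := continuous_fst.comp hX.continuous
  have hic : Continuous i := continuous_snd.comp hX.continuous
  have hsT : s T = s₁ := by simp [s, hX₀]
  have hiT : i T = i₁ := by simp [i, hX₀]
  have hs_le : ∀ t, T ≤ t → s t ≤ s₁ := fun t ht => hsT ▸
    antitoneOn_of_hasDerivWithinAt_nonpos (convex_Ici T) hsc.continuousOn
      (fun t _ => (hs' t).hasDerivWithinAt)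
      (fun t _ => by
        have := mul_nonneg (mul_nonneg hβ.le (clip_nonneg c (s t))) (clip_nonneg c (i t))
        linarith)
      self_mem_Ici ht ht
  have hi_le : ∀ t, T ≤ t → i t ≤ i₁ := fun t ht => hiT ▸
    antitoneOn_of_hasDerivWithinAt_nonpos (convex_Ici T) hic.continuousOn
      (fun t _ => (hi' t).hasDerivWithinAt)
      (fun t ht => by
        rw [interior_Ici] at ht
        have hsβ : β * clip c (s t) < γ := by
          have := clip_le_of_le (c := c) hs₁ (hs_le t ht.le)
          rw [lt_div_iff₀ hβ] at hs₁γ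
          nlinarith
        nlinarith [clip_nonneg c (i t)])
      self_mem_Ici ht ht
  have hs_nonneg : ∀ t, T ≤ t → 0 ≤ s t :=
    nonneg_of_hasDerivAt_nonneg_of_neg hsc (fun t _ => hs' t)
      (fun t _ hneg => by rw [clip_of_neg hneg]; simp) (hsT ▸ hs₁)
  have hi_nonneg : ∀ t, T ≤ t → 0 ≤ i t :=
    nonneg_of_hasDerivAt_nonneg_of_neg hic (fun t _ => hi' t)
      (fun t _ hneg => by rw [clip_of_neg hneg]; simp) (hiT ▸ hi₁)
  exact fun t ht => ⟨⟨hs_nonneg t ht, hs_le t ht⟩, ⟨hi_nonneg t ht, hi_le t ht⟩⟩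

theorem exists_uncontrolled_sir_solution {β γ s₁ i₁ : ℝ} (T : ℝ) (hβ : 0 < β) (hs₁ : 0 ≤ s₁)
    (hs₁γ : s₁ < γ / β) (hi₁ : 0 ≤ i₁) :
    ∃ s i : ℝ → ℝ, Continuous s ∧ Continuous i ∧ s T = s₁ ∧ i T = i₁ ∧
      (∀ t, T ≤ t → i t ≤ i₁) ∧
      ∀ t, T < t →
        HasDerivAt s (-(β * s t * i t)) t ∧ HasDerivAt i (β * s t * i t - γ * i t) t := by
  set c := max s₁ i₁
  obtain ⟨K, C, hK, hC⟩ := exists_lipschitzWith_clippedSirField β γ (le_max_of_le_left hs₁ : 0 ≤ c)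
  obtain ⟨X, hX₀, hX⟩ := exists_isIntegralCurve_of_lipschitzWith hK hC T (s₁, i₁)
  have hbox := hX.mem_Icc_of_clippedSirField hX₀ hβ hs₁ hs₁γ hi₁
  refine ⟨fun t => (X t).1, fun t => (X t).2, continuous_fst.comp hX.continuous,
    continuous_snd.comp hX.continuous, by simp [hX₀], by simp [hX₀], fun t ht => (hbox t ht).2.2,
    fun t ht => ?_⟩
  obtain ⟨⟨hs0, hs⟩, ⟨hi0, hi⟩⟩ := hbox t ht.le
  have hfield : clippedSirField β γ c (X t) = sirField β γ (X t) := by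
    rw [clippedSirField, clip_of_mem_Icc ⟨hs0, hs.trans (le_max_left _ _)⟩,
      clip_of_mem_Icc ⟨hi0, hi.trans (le_max_right _ _)⟩]
  have hXt : HasDerivAt X (sirField β γ (X t)) t := hfield ▸ hX t
  exact ⟨(hasFDerivAt_fst (p := X t)).comp_hasDerivAt t hXt,
    (hasFDerivAt_snd (p := X t)).comp_hasDerivAt t hXt⟩

section SIR

variable {β γ T umax iM s₀ i₀ : ℝ} {u s i : ℝ → ℝ}

lemma IsControl.intervalIntegrable (hu : IsControl umax u) (a b : ℝ) :
    IntervalIntegrable u volume a b :=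
  intervalIntegrable_iff.2 <| IntegrableOn.of_bound measure_Ioc_lt_top
    hu.1.aestronglyMeasurable umax <| ae_of_all _ fun t => by
      rw [Real.norm_eq_abs, abs_of_nonneg (hu.2 t).1]; exact (hu.2 t).2

lemma IsControl.abs_sub_le (hu : IsControl umax u) (β t : ℝ) : |β - u t| ≤ |β| + umax := by
  have := abs_sub β (u t)
  rw [abs_of_nonneg (hu.2 t).1] at this
  linarith [(hu.2 t).2]

lemma IsControl.indicator (hu : IsControl umax u) {S : Set ℝ} (hS : MeasurableSet S) :
    IsControl umax (S.indicator u) := by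
  refine ⟨hu.1.indicator hS, fun t => ?_⟩
  by_cases ht : t ∈ S
  · rw [indicator_of_mem ht]; exact hu.2 t
  · rw [indicator_of_notMem ht]; exact ⟨le_rfl, (hu.2 0).1.trans (hu.2 0).2⟩

lemma IsControl.intervalIntegrable_infection (hu : IsControl umax u) (hs : Continuous s)
    (hi : Continuous i) (a b : ℝ) :
    IntervalIntegrable (fun τ => (β - u τ) * s τ * i τ) volume a b :=
  ((intervalIntegrable_const.sub (hu.intervalIntegrable a b)).mul_continuousOn
    hs.continuousOn).mul_continuousOn hi.continuousOn

lemma SIRSolOn.congr {u' s' i' : ℝ → ℝ} (h : SIRSolOn β γ T u s i s₀ i₀)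
    (hu : EqOn u' u (Icc 0 T)) (hs : EqOn s' s (Icc 0 T)) (hi : EqOn i' i (Icc 0 T)) :
    SIRSolOn β γ T u' s' i' s₀ i₀ := by
  have hsub : ∀ t ∈ Icc (0 : ℝ) T, uIcc 0 t ⊆ Icc 0 T := fun t ht =>
    uIcc_of_le ht.1 ▸ Icc_subset_Icc_right ht.2
  refine ⟨h.1.congr hs, h.2.1.congr hi, fun t ht => ?_, fun t ht => ?_⟩
  · rw [hs ht, h.2.2.1 t ht]
    congr 1
    refine intervalIntegral.integral_congr fun τ hτ => ?_
    simp only [hu (hsub t ht hτ), hs (hsub t ht hτ), hi (hsub t ht hτ)]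
  · rw [hi ht, h.2.2.2 t ht]
    congr 1
    refine intervalIntegral.integral_congr fun τ hτ => ?_
    simp only [hu (hsub t ht hτ), hs (hsub t ht hτ), hi (hsub t ht hτ)]

lemma SIRSolOn.pos (hu : IsControl umax u) (hs : Continuous s) (hi : Continuous i)
    (h : SIRSolOn β γ T u s i s₀ i₀) (hs₀ : 0 < s₀) (hi₀ : 0 < i₀) :
    ∀ t ∈ Icc 0 T, 0 < s t ∧ 0 < i t := by
  intro t ht
  have h0 : (0 : ℝ) ∈ Icc 0 T := ⟨le_rfl, ht.1.trans ht.2⟩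
  have hs0 : s 0 = s₀ := by simpa using h.2.2.1 0 h0
  have hi0 : i 0 = i₀ := by simpa using h.2.2.2 0 h0
  obtain ⟨Ms, hMs⟩ := isCompact_Icc.exists_bound_of_continuousOn (hs.continuousOn (s := Icc 0 T))
  obtain ⟨Mi, hMi⟩ := isCompact_Icc.exists_bound_of_continuousOn (hi.continuousOn (s := Icc 0 T))
  have hβu : ∀ τ, |β - u τ| ≤ |β| + umax := hu.abs_sub_le β
  have hβu0 : 0 ≤ |β| + umax := (abs_nonneg _).trans (hβu 0)
  have hβuI : IntervalIntegrable (fun τ => β - u τ) volume 0 T :=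
    intervalIntegrable_const.sub (hu.intervalIntegrable 0 T)
  -- both equations are linear in the unknown they govern, with bounded coefficient
  constructor
  · refine pos_of_eq_add_integral_mul (g := fun τ => -((β - u τ) * i τ)) (K := (|β| + umax) * Mi)
      hs (hβuI.mul_continuousOn hi.continuousOn).neg (fun τ hτ => ?_) (fun τ hτ => ?_)
      (hs0 ▸ hs₀) t ht
    · rw [abs_neg, abs_mul]
      exact mul_le_mul (hβu τ) (hMi τ hτ) (abs_nonneg _) hβu0
    · rw [hs0, h.2.2.1 τ hτ]
      congr 1
      exact intervalIntegral.integral_congr fun _ _ => by ring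
  · refine pos_of_eq_add_integral_mul (g := fun τ => (β - u τ) * s τ - γ)
      (K := (|β| + umax) * Ms + |γ|) hi
      ((hβuI.mul_continuousOn hs.continuousOn).sub intervalIntegrable_const)
      (fun τ hτ => ?_) (fun τ hτ => ?_) (hi0 ▸ hi₀) t ht
    · refine (abs_sub _ _).trans (add_le_add ?_ le_rfl)
      rw [abs_mul]
      exact mul_le_mul (hβu τ) (hMs τ hτ) (abs_nonneg _) hβu0
    · rw [hi0, h.2.2.2 τ hτ]
      congr 1
      exact intervalIntegral.integral_congr fun _ _ => by ring

lemma SIRSolOn.sirSol_of_hasDerivAt (hT : 0 ≤ T) (hu : IsControl umax u) (hs : Continuous s)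
    (hi : Continuous i) (h : SIRSolOn β γ T u s i s₀ i₀)
    (hderiv : ∀ t, T < t → HasDerivAt s (-((β - u t) * s t * i t)) t ∧
      HasDerivAt i ((β - u t) * s t * i t - γ * i t) t) :
    SIRSol β γ u s i s₀ i₀ := by
  have hT' : T ∈ Icc (0 : ℝ) T := ⟨hT, le_rfl⟩
  have hI := hu.intervalIntegrable_infection (β := β) hs hi 0
  refine ⟨hs, hi, fun t ht => ?_, fun t ht => ?_⟩ <;> rcases le_or_gt t T with htT | htT
  · exact h.2.2.1 t ⟨ht, htT⟩
  · exact eq_add_integral_of_hasDerivAt_of_gt hs (fun t => (hI t).neg) (h.2.2.1 T hT')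
      (fun t ht => (hderiv t ht).1) t htT.le
  · exact h.2.2.2 t ⟨ht, htT⟩
  · exact eq_add_integral_of_hasDerivAt_of_gt hi
      (fun t => (hI t).sub ((hi.intervalIntegrable 0 t).const_mul γ)) (h.2.2.2 T hT')
      (fun t ht => (hderiv t ht).2) t htT.le

theorem SIRSolOn.exists_sirSol_indicator_Iic (hβ : 0 < β) (hT : 0 ≤ T) (hu : IsControl umax u)
    (h : SIRSolOn β γ T u s i s₀ i₀) (hs₀ : 0 < s₀) (hi₀ : 0 < i₀)
    (hiM : ∀ t ∈ Icc 0 T, i t ≤ iM) (hsT : s T < γ / β) :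
    ∃ s' i' : ℝ → ℝ, SIRSol β γ ((Iic T).indicator u) s' i' s₀ i₀ ∧ Admissible iM i' := by
  have hTmem : T ∈ Icc 0 T := ⟨hT, le_rfl⟩
  obtain ⟨sc, hsc, hssc⟩ := h.1.exists_continuous_eqOn_Icc hT
  obtain ⟨ic, hic, hiic⟩ := h.2.1.exists_continuous_eqOn_Icc hT
  have hc : SIRSolOn β γ T u sc ic s₀ i₀ := h.congr (eqOn_refl _ _) hssc hiic
  obtain ⟨hsT₀, hiT₀⟩ := hc.pos hu hsc hic hs₀ hi₀ T hTmem
  obtain ⟨sN, iN, hsN, hiN, hsNT, hiNT, hiN_le, hN'⟩ :=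
    exists_uncontrolled_sir_solution T hβ hsT₀.le (hssc hTmem ▸ hsT) hiT₀.le
  set s' : ℝ → ℝ := fun t => if t ≤ T then sc t else sN t
  set i' : ℝ → ℝ := fun t => if t ≤ T then ic t else iN t
  have hs' : Continuous s' :=
    Continuous.if_le hsc hsN continuous_id continuous_const fun t ht => by rw [ht, hsNT]
  have hi' : Continuous i' :=
    Continuous.if_le hic hiN continuous_id continuous_const fun t ht => by rw [ht, hiNT]
  have hon : SIRSolOn β γ T ((Iic T).indicator u) s' i' s₀ i₀ :=
    hc.congr (fun t ht => indicator_of_mem (mem_Iic.2 ht.2) u) (fun t ht => if_pos ht.2)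
      (fun t ht => if_pos ht.2)
  refine ⟨s', i', hon.sirSol_of_hasDerivAt hT (hu.indicator measurableSet_Iic) hs' hi'
    fun t ht => ?_, fun t ht => ?_⟩
  · have hnear : ∀ᶠ τ in 𝓝 t, T < τ := Ioi_mem_nhds ht
    have hs'N : s' =ᶠ[𝓝 t] sN := hnear.mono fun τ hτ => if_neg (not_le.2 hτ)
    have hi'N : i' =ᶠ[𝓝 t] iN := hnear.mono fun τ hτ => if_neg (not_le.2 hτ)
    rw [indicator_of_notMem (notMem_Iic.2 ht) u, sub_zero, hs'N.eq_of_nhds, hi'N.eq_of_nhds]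
    exact ⟨(hN' t ht).1.congr_of_eventuallyEq hs'N, (hN' t ht).2.congr_of_eventuallyEq hi'N⟩
  · rcases le_or_gt t T with htT | htT
    · rw [show i' t = ic t from if_pos htT, hiic ⟨ht, htT⟩]
      exact hiM t ⟨ht, htT⟩
    · rw [show i' t = iN t from if_neg (not_le.2 htT)]
      exact (hiN_le t htT.le).trans ((hiic hTmem).trans_le (hiM T hTmem))

lemma costT_eq_ofReal_integral {l1 : ℝ} (hl1 : 0 ≤ l1) (hT : 0 ≤ T) (hu : IsControl umax u)
    (i : ℝ → ℝ) : CostT l1 0 T u i = ENNReal.ofReal (∫ t in 0..T, l1 * u t) := by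
  rw [intervalIntegral.integral_of_le hT, ofReal_integral_eq_lintegral_ofReal
    ((intervalIntegrable_iff_integrableOn_Ioc_of_le hT).1
      ((hu.intervalIntegrable 0 T).const_mul l1))
    (ae_of_all _ fun t => mul_nonneg hl1 (hu.2 t).1)]
  simp [CostT]

lemma cost_indicator_Iic {l1 : ℝ} (hT : 0 ≤ T) (u i i' : ℝ → ℝ) :
    Cost l1 0 ((Iic T).indicator u) i' = CostT l1 0 T u i := by
  simp only [Cost, CostT, zero_mul, add_zero]
  rw [← Ioc_union_Ioi_eq_Ioi hT, lintegral_union measurableSet_Ioi (Ioc_disjoint_Ioi le_rfl),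
    setLIntegral_congr_fun measurableSet_Ioc fun t ht => by rw [indicator_of_mem (mem_Iic.2 ht.2)],
    setLIntegral_congr_fun measurableSet_Ioi (g := fun _ => 0) fun t ht => by
      rw [indicator_of_notMem (notMem_Iic.2 ht), mul_zero, ENNReal.ofReal_zero]]
  simp

end SIR

theorem statement12 (β γ umax iM l1 l2 : ℝ) (hβ : 0 < β)
    (hl1 : 0 < l1) (hl2 : l2 = 0)
    (s₀ i₀ : ℝ) (hB : (s₀, i₀) ∈ ViableSet β γ umax iM) (hi₀ : 0 < i₀)
    (u i : ℝ → ℝ) (hu : IsControl umax u)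
    (hopt : ∀ v sv iv : ℝ → ℝ, IsControl umax v → SIRSol β γ v sv iv s₀ i₀ →
      Admissible iM iv → Cost l1 l2 u i ≤ Cost l1 l2 v iv)
    (Tγβ : ℝ) (hTγβ : 0 ≤ Tγβ)
    (T : ℝ) (hT : Tγβ < T) :
    ∀ v sv iv : ℝ → ℝ, IsControl umax v → SIRSolOn β γ T v sv iv s₀ i₀ →
      (∀ t ∈ Set.Icc (0:ℝ) T, iv t ≤ iM) → sv T < γ / β →
      (∫ t in (0:ℝ)..T, l1 * u t) ≤ ∫ t in (0:ℝ)..T, l1 * v t := by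
  intro v sv iv hv hsolv hivM hsvT
  subst hl2
  have hT₀ : 0 ≤ T := hTγβ.trans hT.le
  obtain ⟨sw, iw, hsolw, hadmw⟩ :=
    hsolv.exists_sirSol_indicator_Iic hβ hT₀ hv hB.1.1 hi₀ hivM hsvT
  have hcost := hopt _ sw iw (hv.indicator measurableSet_Iic) hsolw hadmw
  rw [cost_indicator_Iic hT₀ v iw iw] at hcost
  rw [← ENNReal.ofReal_le_ofReal_iff
      (intervalIntegral.integral_nonneg hT₀ fun t _ => mul_nonneg hl1.le (hv.2 t).1),
    ← costT_eq_ofReal_integral hl1.le hT₀ hu i, ← costT_eq_ofReal_integral hl1.le hT₀ hv iw]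
  exact (lintegral_mono_set Ioc_subset_Ioi_self).trans hcost
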